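/- arXiv:hep-th/9405167 — 7 statements merged into one kernel-verified Lean document; each statement's English description precedes it below -/
import Mathlib

section
/- Let E be a real inner product space, let P be a finite subset of E, and let a ∈ P with a ≠ 0. Let s : E → E be the reflection s(x) = x − (2⟪x,a⟫/⟪a,a⟫) • a, and assume s '' (P \ {a}) = P \ {a}. Let c : E → ℝ be any function that is constant on norm levels, i.e. c(β) = c(β') whenever ‖β‖ = ‖β'‖. Then ⟪a, Σ_{β ∈ P} c(β) • β⟫ = c(a) · ⟪a,a⟫. -/
/-!
The map `s` is the orthogonal reflection in the hyperplane `a⟂`. It is an isometry, so `c ∘ s = c`,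
and it negates `⟪a, ·⟫`; hence the involution `s` of `P \ {a}` turns the sum of `c β * ⟪a, β⟫` over
`P \ {a}` into its negative, so that sum vanishes and only the term `β = a` survives.
-/

open Finset RealInnerProductSpace

theorem Finset.sum_eq_zero_of_image_eq_of_comp_eq_neg {ι M : Type*} [DecidableEq ι]
    [AddCommGroup M] [IsAddTorsionFree M] {s : Finset ι} {g : ι → ι} (hg : Set.InjOn g s)
    (himage : s.image g = s) {f : ι → M} (hf : ∀ x ∈ s, f (g x) = -f x) :
    ∑ x ∈ s, f x = 0 := by
  have hsum := sum_image (f := f) hg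
  rw [himage, sum_congr rfl hf, sum_neg_distrib] at hsum
  exact self_eq_neg.mp hsum

section Reflection

variable {E : Type*} [NormedAddCommGroup E] [InnerProductSpace ℝ E]

theorem Submodule.reflection_orthogonalComplement_singleton_apply (a x : E) :
    (ℝ ∙ a)ᗮ.reflection x = x - (2 * ⟪x, a⟫ / ⟪a, a⟫) • a := by
  rw [reflection_orthogonal_apply, reflection_singleton_apply, real_inner_self_eq_norm_sq,
    real_inner_comm, two_smul, two_mul, add_div, add_smul]
  simp only [RCLike.ofReal_real_eq_id, id_eq]
  abel

theorem Submodule.inner_reflection_orthogonalComplement_singleton_right (a x : E) :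
    ⟪a, (ℝ ∙ a)ᗮ.reflection x⟫ = -⟪a, x⟫ := by
  set R := (ℝ ∙ a)ᗮ.reflection
  calc ⟪a, R x⟫ = -⟪R a, R x⟫ := by
        rw [reflection_orthogonalComplement_singleton_eq_neg, inner_neg_left, neg_neg]
    _ = -⟪a, x⟫ := by rw [R.inner_map_map]

end Reflection

theorem stmt_1_general {E : Type*} [NormedAddCommGroup E] [InnerProductSpace ℝ E]
    (P : Finset E) (a : E) (haP : a ∈ P)
    (s : E → E)
    (hs : ∀ x : E, s x = x - ((2 * (inner ℝ x a : ℝ) / (inner ℝ a a : ℝ)) • a))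
    (hperm : s '' ((P : Set E) \ {a}) = (P : Set E) \ {a})
    (c : E → ℝ) (hc : ∀ β β' : E, ‖β‖ = ‖β'‖ → c β = c β') :
    (inner ℝ a (∑ β ∈ P, c β • β) : ℝ) = c a * (inner ℝ a a : ℝ) := by
  classical
  set R := (ℝ ∙ a)ᗮ.reflection
  have hsR : s = R := funext fun x ↦ by
    rw [hs, Submodule.reflection_orthogonalComplement_singleton_apply]
  have himage : (P.erase a).image R = P.erase a := by
    apply coe_injective
    rw [coe_image, coe_erase, ← hsR, hperm]
  have hrest : ∑ β ∈ P.erase a, ⟪a, c β • β⟫ = 0 := by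
    refine sum_eq_zero_of_image_eq_of_comp_eq_neg R.injective.injOn himage fun x _ ↦ ?_
    rw [real_inner_smul_right, real_inner_smul_right, hc _ x (R.norm_map x),
      Submodule.inner_reflection_orthogonalComplement_singleton_right, mul_neg]
  rw [inner_sum, ← add_sum_erase _ _ haP, hrest, add_zero, real_inner_smul_right]

/-- Corollary to the Lemma on `ρ(d)`: if the reflection `s` in the hyperplane orthogonal
to `a ∈ P` permutes `P \ {a}`, and `c : E → ℝ` depends only on the norm, then
`⟪a, ∑_{β ∈ P} c β • β⟫ = c a * ⟪a,a⟫`. -/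
theorem stmt_1 {E : Type*} [NormedAddCommGroup E] [InnerProductSpace ℝ E]
    (P : Finset E) (a : E) (haP : a ∈ P) (ha : a ≠ 0)
    (s : E → E)
    (hs : ∀ x : E, s x = x - ((2 * (inner ℝ x a : ℝ) / (inner ℝ a a : ℝ)) • a))
    (hperm : s '' ((P : Set E) \ {a}) = (P : Set E) \ {a})
    (c : E → ℝ) (hc : ∀ β β' : E, ‖β‖ = ‖β'‖ → c β = c β') :
    (inner ℝ a (∑ β ∈ P, c β • β) : ℝ) = c a * (inner ℝ a a : ℝ) :=
  stmt_1_general P a haP s hs hperm c hc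
end

section
/- Let G be a finite commutative group and π a pairing on G. Let A = MonoidAlgebra ℂ G and let R̊ ∈ A ⊗[ℂ] A be the element R̊ = |G|⁻¹ • Σ_{g,h ∈ G} ((π g h)⁻¹ : ℂ) • (g ⊗ₜ h). Then in A ⊗[ℂ] A ⊗[ℂ] A one has (Δ ⊗ id)(R̊) = R̊¹³ · R̊²³ and (id ⊗ Δ)(R̊) = R̊¹³ · R̊¹², where Δ is the comultiplication of A, R̊¹³ = |G|⁻¹ • Σ_{g,h} ((π g h)⁻¹) • (g ⊗ₜ 1 ⊗ₜ h), R̊²³ = |G|⁻¹ • Σ_{g,h} ((π g h)⁻¹) • (1 ⊗ₜ g ⊗ₜ h), R̊¹² = |G|⁻¹ • Σ_{g,h} ((π g h)⁻¹) • (g ⊗ₜ h ⊗ₜ 1), and the products are taken in the tensor-product algebra A ⊗ A ⊗ A. -/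
open scoped TensorProduct

/-- The element `R̊ = |G|⁻¹ ∑_{g,h} π(g,h)⁻¹ g ⊗ h` of `ℂ[G] ⊗ ℂ[G]`. -/
noncomputable def Rcirc (G : Type*) [CommGroup G] [Fintype G] (π : G → G → ℂˣ) :
    MonoidAlgebra ℂ G ⊗[ℂ] MonoidAlgebra ℂ G :=
  (Fintype.card G : ℂ)⁻¹ •
    ∑ g : G, ∑ h : G, ((π g h : ℂ))⁻¹ •
      (MonoidAlgebra.single g (1 : ℂ) ⊗ₜ[ℂ] MonoidAlgebra.single h (1 : ℂ))

/-- The comultiplication of the group algebra `ℂ[G]`, the linear map determined by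
`Δ(g) = g ⊗ g` on group elements. -/
noncomputable def comulGA (G : Type*) [CommGroup G] :
    MonoidAlgebra ℂ G →ₗ[ℂ] MonoidAlgebra ℂ G ⊗[ℂ] MonoidAlgebra ℂ G :=
  (Finsupp.lsum ℂ fun g => LinearMap.toSpanSingleton ℂ _
    (MonoidAlgebra.single g (1 : ℂ) ⊗ₜ[ℂ] MonoidAlgebra.single g (1 : ℂ))) ∘ₗ
    (MonoidAlgebra.coeffLinearEquiv (S := ℂ) ℂ).toLinearMap

/-!
For multiplicative `y`, put `Y_g = ∑_h π(g,h)⁻¹ y(h)`. Reindexing gives `y(k) Y_g = π(g,k) Y_g`,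
and orthogonality of the characters `π(g, ·)` then gives `Y_g Y_{g'} = δ_{g g'} |G| Y_g`.
Writing `R̊¹³ = |G|⁻¹ ∑_g (g ⊗ 1) ⊗ Y_g` and `R̊²³ = |G|⁻¹ ∑_g (1 ⊗ g) ⊗ Y_g`, the double sum in
`R̊¹³ R̊²³` collapses to its diagonal `|G|⁻¹ ∑_g (g ⊗ g) ⊗ Y_g = (Δ ⊗ id) R̊`. The second identity is
the first one transported along the flip of tensor factors, which preserves `R̊` since `π` is
symmetric.
-/

section Pairing

open Finset

variable {K G : Type*} [Field K] [Group G] [Fintype G] (π : G → G → Kˣ)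

theorem sum_pairing_eq_ite [DecidableEq G]
    (hmul_left : ∀ g h k : G, π (g * h) k = π g k * π h k)
    (hmul_right : ∀ g h k : G, π g (h * k) = π g h * π g k)
    (hnondeg : ∀ g : G, (∀ h : G, π g h = 1) → g = 1) (a : G) :
    ∑ k : G, (π a k : K) = if a = 1 then (Fintype.card G : K) else 0 := by
  split_ifs with ha
  · have hone (k : G) : π 1 k = 1 := (MonoidHom.mk' (π · k) (hmul_left · · k)).map_one
    simp [ha, hone]
  · exact sum_hom_units_eq_zero ((Units.coeHom K).comp (MonoidHom.mk' (π a) (hmul_right a)))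
      fun hχ => ha (hnondeg a fun k => Units.ext (DFunLike.congr_fun hχ k))

theorem sum_inv_pairing_mul_pairing [DecidableEq G]
    (hmul_left : ∀ g h k : G, π (g * h) k = π g k * π h k)
    (hmul_right : ∀ g h k : G, π g (h * k) = π g h * π g k)
    (hnondeg : ∀ g : G, (∀ h : G, π g h = 1) → g = 1) (g g' : G) :
    ∑ k : G, (π g k : K)⁻¹ * π g' k = if g = g' then (Fintype.card G : K) else 0 := by
  have hinv (k : G) : π g⁻¹ k = (π g k)⁻¹ := (MonoidHom.mk' (π · k) (hmul_left · · k)).map_inv g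
  have hterm (k : G) : (π g k : K)⁻¹ * π g' k = π (g⁻¹ * g') k := by
    rw [hmul_left, hinv, Units.val_mul, Units.val_inv_eq_inv_val]
  simp only [hterm, sum_pairing_eq_ite π hmul_left hmul_right hnondeg, inv_mul_eq_one]

end Pairing

section PairingTensor

open Finset TensorProduct

variable {K G B C : Type*} [Field K] [Fintype G] (π : G → G → Kˣ)

noncomputable def pairingTransform [AddCommMonoid C] [Module K C] (y : G → C) (g : G) : C :=
  ∑ h : G, (π g h : K)⁻¹ • y h

/-- `Rcirc G π` and its legs `R̊¹³`, `R̊²³`, `R̊¹²` are all of this form. -/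
noncomputable def pairingTensor [AddCommMonoid B] [Module K B] [AddCommMonoid C] [Module K C]
    (x : G → B) (y : G → C) : B ⊗[K] C :=
  (Fintype.card G : K)⁻¹ • ∑ g : G, ∑ h : G, (π g h : K)⁻¹ • (x g ⊗ₜ[K] y h)

theorem pairingTensor_eq_sum_tmul [AddCommMonoid B] [Module K B] [AddCommMonoid C] [Module K C]
    (x : G → B) (y : G → C) :
    pairingTensor π x y =
      (Fintype.card G : K)⁻¹ • ∑ g : G, x g ⊗ₜ[K] pairingTransform π y g := by
  simp only [pairingTensor, pairingTransform, tmul_sum, tmul_smul]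

theorem map_pairingTensor {B' C' : Type*} [AddCommMonoid B] [Module K B] [AddCommMonoid C]
    [Module K C] [AddCommMonoid B'] [Module K B'] [AddCommMonoid C'] [Module K C']
    (f : B →ₗ[K] B') (f' : C →ₗ[K] C') (x : G → B) (y : G → C) :
    TensorProduct.map f f' (pairingTensor π x y) = pairingTensor π (f ∘ x) (f' ∘ y) := by
  simp only [pairingTensor, map_smul, map_sum, map_tmul, Function.comp_apply]

variable [Semiring B] [Algebra K B] [Semiring C] [Algebra K C]

theorem comm_pairingTensor (hsymm : ∀ g h : G, π g h = π h g) (x : G → B) (y : G → C) :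
    Algebra.TensorProduct.comm K B C (pairingTensor π x y) = pairingTensor π y x := by
  simp only [pairingTensor, map_smul, map_sum, Algebra.TensorProduct.comm_tmul]
  rw [sum_comm]
  simp only [hsymm]

variable [Group G]

theorem mul_pairingTransform (hmul_right : ∀ g h k : G, π g (h * k) = π g h * π g k)
    (y : G → C) (hy : ∀ a b, y (a * b) = y a * y b) (g k : G) :
    y k * pairingTransform π y g = (π g k : K) • pairingTransform π y g := by
  have hcoeff (h : G) : (π g h : K)⁻¹ = π g k * (π g (k * h) : K)⁻¹ := by
    rw [hmul_right, Units.val_mul, mul_inv, ← mul_assoc, mul_inv_cancel₀ (Units.ne_zero _),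
      one_mul]
  calc y k * pairingTransform π y g
      = ∑ h : G, (π g k : K) • ((π g (k * h) : K)⁻¹ • y (k * h)) := by
        simp only [pairingTransform, mul_sum, mul_smul_comm, ← hy, ← mul_smul, ← hcoeff]
    _ = (π g k : K) • pairingTransform π y g := by
        rw [← smul_sum, pairingTransform]
        congr 1
        exact Equiv.sum_comp (Equiv.mulLeft k) fun h => (π g h : K)⁻¹ • y h

theorem pairingTransform_mul_pairingTransform [DecidableEq G]
    (hmul_left : ∀ g h k : G, π (g * h) k = π g k * π h k)
    (hmul_right : ∀ g h k : G, π g (h * k) = π g h * π g k)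
    (hnondeg : ∀ g : G, (∀ h : G, π g h = 1) → g = 1)
    (y : G → C) (hy : ∀ a b, y (a * b) = y a * y b) (g g' : G) :
    pairingTransform π y g * pairingTransform π y g' =
      if g = g' then (Fintype.card G : K) • pairingTransform π y g else 0 := by
  calc pairingTransform π y g * pairingTransform π y g'
      = (∑ k : G, (π g k : K)⁻¹ * π g' k) • pairingTransform π y g' := by
        nth_rw 1 [pairingTransform]
        simp only [sum_mul, smul_mul_assoc, mul_pairingTransform π hmul_right y hy, smul_smul,
          sum_smul]
    _ = _ := by
        rw [sum_inv_pairing_mul_pairing π hmul_left hmul_right hnondeg]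
        split_ifs with h
        · rw [h]
        · exact zero_smul K _

theorem pairingTensor_mul_pairingTensor_left
    (hmul_left : ∀ g h k : G, π (g * h) k = π g k * π h k)
    (hmul_right : ∀ g h k : G, π g (h * k) = π g h * π g k)
    (hnondeg : ∀ g : G, (∀ h : G, π g h = 1) → g = 1)
    (x x' : G → B) (y : G → C) (hy : ∀ a b, y (a * b) = y a * y b) :
    pairingTensor π x y * pairingTensor π x' y = pairingTensor π (x * x') y := by
  classical
  simp only [pairingTensor_eq_sum_tmul, smul_mul_smul_comm, sum_mul_sum,
    Algebra.TensorProduct.tmul_mul_tmul,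
    pairingTransform_mul_pairingTransform π hmul_left hmul_right hnondeg y hy, tmul_ite,
    sum_ite_eq, mem_univ, if_true, tmul_smul, ← smul_sum, smul_smul, Pi.mul_apply]
  congr 1
  simpa only [inv_inv] using mul_self_mul_inv (Fintype.card G : K)⁻¹

theorem pairingTensor_mul_pairingTensor_right
    (hmul_left : ∀ g h k : G, π (g * h) k = π g k * π h k)
    (hmul_right : ∀ g h k : G, π g (h * k) = π g h * π g k)
    (hsymm : ∀ g h : G, π g h = π h g)
    (hnondeg : ∀ g : G, (∀ h : G, π g h = 1) → g = 1)
    (x : G → B) (hx : ∀ a b, x (a * b) = x a * x b) (y y' : G → C) :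
    pairingTensor π x y * pairingTensor π x y' = pairingTensor π x (y * y') := by
  apply (Algebra.TensorProduct.comm K B C).injective
  rw [map_mul, comm_pairingTensor π hsymm, comm_pairingTensor π hsymm,
    comm_pairingTensor π hsymm,
    pairingTensor_mul_pairingTensor_left π hmul_left hmul_right hnondeg y y' x hx]

end PairingTensor

theorem comulGA_single {G : Type*} [CommGroup G] (g : G) :
    comulGA G (MonoidAlgebra.single g (1 : ℂ)) =
      MonoidAlgebra.single g (1 : ℂ) ⊗ₜ[ℂ] MonoidAlgebra.single g (1 : ℂ) := by
  simp [comulGA]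

/-- `R̊` satisfies the Cartan-part `R`-matrix identities
`(Δ ⊗ 1)(R̊) = R̊¹³·R̊²³` and `(1 ⊗ Δ)(R̊) = R̊¹³·R̊¹²`. -/
theorem stmt_2 {G : Type*} [CommGroup G] [Fintype G]
    (π : G → G → ℂˣ)
    (hmul_left : ∀ g h k : G, π (g * h) k = π g k * π h k)
    (hmul_right : ∀ g h k : G, π g (h * k) = π g h * π g k)
    (hsymm : ∀ g h : G, π g h = π h g)
    (hnondeg : ∀ g : G, (∀ h : G, π g h = 1) → g = 1) :
    (TensorProduct.map (comulGA G) LinearMap.id (Rcirc G π) =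
      ((Fintype.card G : ℂ)⁻¹ •
          ∑ g : G, ∑ h : G, ((π g h : ℂ))⁻¹ •
            ((MonoidAlgebra.single g (1 : ℂ) ⊗ₜ[ℂ] (1 : MonoidAlgebra ℂ G)) ⊗ₜ[ℂ]
              MonoidAlgebra.single h (1 : ℂ))) *
        ((Fintype.card G : ℂ)⁻¹ •
          ∑ g : G, ∑ h : G, ((π g h : ℂ))⁻¹ •
            (((1 : MonoidAlgebra ℂ G) ⊗ₜ[ℂ] MonoidAlgebra.single g (1 : ℂ)) ⊗ₜ[ℂ]
              MonoidAlgebra.single h (1 : ℂ)))) ∧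
    (TensorProduct.map LinearMap.id (comulGA G) (Rcirc G π) =
      ((Fintype.card G : ℂ)⁻¹ •
          ∑ g : G, ∑ h : G, ((π g h : ℂ))⁻¹ •
            (MonoidAlgebra.single g (1 : ℂ) ⊗ₜ[ℂ]
              ((1 : MonoidAlgebra ℂ G) ⊗ₜ[ℂ] MonoidAlgebra.single h (1 : ℂ)))) *
        ((Fintype.card G : ℂ)⁻¹ •
          ∑ g : G, ∑ h : G, ((π g h : ℂ))⁻¹ •
            (MonoidAlgebra.single g (1 : ℂ) ⊗ₜ[ℂ]
              (MonoidAlgebra.single h (1 : ℂ) ⊗ₜ[ℂ] (1 : MonoidAlgebra ℂ G))))) := by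
  let s : G → MonoidAlgebra ℂ G := fun g => MonoidAlgebra.single g 1
  have hs (a b : G) : s (a * b) = s a * s b := by simp [s, MonoidAlgebra.single_mul_single]
  constructor
  · calc TensorProduct.map (comulGA G) LinearMap.id (Rcirc G π)
        = pairingTensor π (comulGA G ∘ s) (LinearMap.id ∘ s) := map_pairingTensor π _ _ s s
      _ = pairingTensor π ((fun g => s g ⊗ₜ[ℂ] 1) * fun g => 1 ⊗ₜ[ℂ] s g) s := by
          congr 1
          funext g
          simp [s, comulGA_single]
      _ = _ := (pairingTensor_mul_pairingTensor_left π hmul_left hmul_right hnondeg _ _ s hs).symm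
  · calc TensorProduct.map LinearMap.id (comulGA G) (Rcirc G π)
        = pairingTensor π (LinearMap.id ∘ s) (comulGA G ∘ s) := map_pairingTensor π _ _ s s
      _ = pairingTensor π s ((fun h => 1 ⊗ₜ[ℂ] s h) * fun h => s h ⊗ₜ[ℂ] 1) := by
          congr 1
          funext h
          simp [s, comulGA_single]
      _ = _ := (pairingTensor_mul_pairingTensor_right π hmul_left hmul_right hsymm hnondeg
            s hs _ _).symm
end

section
/- Let G be a finite commutative group and π a pairing on G. Let A = MonoidAlgebra ℂ G and let R̊ ∈ A ⊗[ℂ] A be the element R̊ = |G|⁻¹ • Σ_{g,h ∈ G} ((π g h)⁻¹ : ℂ) • (g ⊗ₜ h). Let X = {x ∈ G | x² = 1}. Then, in the algebra A ⊗[ℂ] A, R̊ · R̊ = (|G| · |X|)⁻¹ • Σ_{e,f ∈ G} ((π e (f²))⁻¹ : ℂ) • (e² ⊗ₜ f²). (This is the paper's formula R̊² = |2G|⁻¹ Σ_{c,d ∈ 2G} π₂(c,d)⁻¹ c ⊗ d, where 2G = {g² : g ∈ G} and π₂(c,d) = π(e,d) for any e with e² = c; in particular R̊² lies in ℂ[2G]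 ⊗ ℂ[2G].) -/
open scoped TensorProduct

/-!
Write `χ_g = ∑_h π(g,h)⁻¹ h ∈ ℂ[G]`, so that `R̊ = |G|⁻¹ ∑_g g ⊗ χ_g`. Orthogonality of the
characters `π(g,·)` gives `χ_g χ_{g'} = δ_{g,g'} |G| χ_g`, hence `R̊² = |G|⁻¹ ∑_g g² ⊗ χ_g`.
Since `g ↦ g²` is constant on the cosets `eX`, averaging over `X` rewrites this as
`(|G| |X|)⁻¹ ∑_e e² ⊗ ∑_{x ∈ X} χ_{ex}`, and `∑_{x ∈ X} χ_{ex} = ∑_f π(e,f²)⁻¹ f²` comes down to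
`∑_{x ∈ X} π(x,k)⁻¹ = #{f | f² = k}`. The latter follows from orthogonality in both variables
once the indicator of `x² = 1` is written as `|G|⁻¹ ∑_f π(x², f) = |G|⁻¹ ∑_f π(x, f²)`.
-/

open Finset MonoidAlgebra

section Pairing

variable {G : Type*} [CommGroup G] {π : G → G → ℂˣ}

theorem pairing_one_left (hmul_left : ∀ g h k : G, π (g * h) k = π g k * π h k) (k : G) :
    π 1 k = 1 :=
  map_one (MonoidHom.mk' (π · k) fun a b => hmul_left a b k)

theorem pairing_inv_left (hmul_left : ∀ g h k : G, π (g * h) k = π g k * π h k) (g k : G) :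
    π g⁻¹ k = (π g k)⁻¹ :=
  map_inv (MonoidHom.mk' (π · k) fun a b => hmul_left a b k) g

theorem pairing_inv_right (hmul_right : ∀ g h k : G, π g (h * k) = π g h * π g k) (g k : G) :
    π g k⁻¹ = (π g k)⁻¹ :=
  map_inv (MonoidHom.mk' (π g) (hmul_right g)) k

theorem pairing_sq_left_eq_sq_right (hmul_left : ∀ g h k : G, π (g * h) k = π g k * π h k)
    (hmul_right : ∀ g h k : G, π g (h * k) = π g h * π g k) (g k : G) :
    π (g ^ 2) k = π g (k ^ 2) := by
  rw [sq, sq, hmul_left, hmul_right]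

variable [Fintype G]

theorem sum_pairing_right (hmul_left : ∀ g h k : G, π (g * h) k = π g k * π h k)
    (hmul_right : ∀ g h k : G, π g (h * k) = π g h * π g k)
    (hnondeg : ∀ g : G, (∀ h : G, π g h = 1) → g = 1) (g : G) [Decidable (g = 1)] :
    ∑ h, (π g h : ℂ) = if g = 1 then (Fintype.card G : ℂ) else 0 := by
  split_ifs with hg
  · simp [hg, pairing_one_left hmul_left]
  · refine sum_hom_units_eq_zero ((Units.coeHom ℂ).comp (MonoidHom.mk' (π g) (hmul_right g)))
      fun h1 => hg (hnondeg g fun h => Units.ext (DFunLike.congr_fun h1 h))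

theorem sum_pairing_left (hmul_left : ∀ g h k : G, π (g * h) k = π g k * π h k)
    (hmul_right : ∀ g h k : G, π g (h * k) = π g h * π g k) (hsymm : ∀ g h : G, π g h = π h g)
    (hnondeg : ∀ g : G, (∀ h : G, π g h = 1) → g = 1) (k : G) [Decidable (k = 1)] :
    ∑ g, (π g k : ℂ) = if k = 1 then (Fintype.card G : ℂ) else 0 := by
  simp_rw [hsymm _ k]
  exact sum_pairing_right hmul_left hmul_right hnondeg k

theorem sum_two_torsion_pairing_inv [DecidableEq G]
    (hmul_left : ∀ g h k : G, π (g * h) k = π g k * π h k)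
    (hmul_right : ∀ g h k : G, π g (h * k) = π g h * π g k) (hsymm : ∀ g h : G, π g h = π h g)
    (hnondeg : ∀ g : G, (∀ h : G, π g h = 1) → g = 1) (k : G) :
    ∑ x ∈ univ.filter (fun x : G => x ^ 2 = 1), (π x k : ℂ)⁻¹ =
      (univ.filter (fun f : G => f ^ 2 = k)).card := by
  have hN : (Fintype.card G : ℂ) ≠ 0 := by simp
  refine mul_left_cancel₀ hN ?_
  calc (Fintype.card G : ℂ) * ∑ x ∈ univ.filter (fun x : G => x ^ 2 = 1), (π x k : ℂ)⁻¹
      = ∑ x, ∑ f, (π (x ^ 2) f : ℂ) * (π x k : ℂ)⁻¹ := by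
        simp_rw [← sum_mul, sum_pairing_right hmul_left hmul_right hnondeg, ite_mul, zero_mul,
          sum_ite, sum_const_zero, add_zero, mul_sum]
    _ = ∑ f, ∑ x, (π x (f ^ 2 * k⁻¹) : ℂ) := by
        rw [sum_comm]
        simp_rw [pairing_sq_left_eq_sq_right hmul_left hmul_right, hmul_right,
          pairing_inv_right hmul_right, Units.val_mul, Units.val_inv_eq_inv_val]
    _ = (Fintype.card G : ℂ) * (univ.filter (fun f : G => f ^ 2 = k)).card := by
        simp_rw [sum_pairing_left hmul_left hmul_right hsymm hnondeg, mul_inv_eq_one]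
        rw [← sum_filter, sum_const, nsmul_eq_mul, mul_comm]

end Pairing

section PairingChar

variable {G : Type*} [CommGroup G] [Fintype G] {π : G → G → ℂˣ}

variable (π) in
noncomputable def pairingChar (g : G) : MonoidAlgebra ℂ G :=
  ∑ h, (π g h : ℂ)⁻¹ • single h 1

theorem pairingChar_mul_pairingChar [DecidableEq G]
    (hmul_left : ∀ g h k : G, π (g * h) k = π g k * π h k)
    (hmul_right : ∀ g h k : G, π g (h * k) = π g h * π g k)
    (hnondeg : ∀ g : G, (∀ h : G, π g h = 1) → g = 1) (g g' : G) :
    pairingChar π g * pairingChar π g' =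
      if g = g' then (Fintype.card G : ℂ) • pairingChar π g else 0 := by
  have hshift (h : G) : ∑ h', ((π g h : ℂ)⁻¹ * (π g' h' : ℂ)⁻¹) • single (h * h') (1 : ℂ) =
      ∑ k, ((π (g⁻¹ * g') h : ℂ) * (π g' k : ℂ)⁻¹) • single k 1 := by
    rw [← Equiv.sum_comp (Equiv.mulLeft h⁻¹)]
    refine sum_congr rfl fun k _ => ?_
    simp only [Equiv.coe_mulLeft, mul_inv_cancel_left, hmul_left, hmul_right,
      pairing_inv_left hmul_left, pairing_inv_right hmul_right, Units.val_mul,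
      Units.val_inv_eq_inv_val, mul_inv, inv_inv]
    ring_nf
  calc pairingChar π g * pairingChar π g'
      = ∑ k, ((∑ h, (π (g⁻¹ * g') h : ℂ)) * (π g' k : ℂ)⁻¹) • single k 1 := by
        simp_rw [pairingChar, sum_mul_sum, smul_mul_smul, single_mul_single, mul_one, hshift]
        rw [sum_comm]
        simp_rw [sum_mul, sum_smul]
    _ = if g = g' then (Fintype.card G : ℂ) • pairingChar π g else 0 := by
        simp_rw [sum_pairing_right hmul_left hmul_right hnondeg, inv_mul_eq_one]
        split_ifs with hgg
        · simp [pairingChar, hgg, smul_sum]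
        · simp

theorem Rcirc_eq_sum_tmul_pairingChar :
    Rcirc G π = (Fintype.card G : ℂ)⁻¹ • ∑ g, single g (1 : ℂ) ⊗ₜ[ℂ] pairingChar π g := by
  simp_rw [Rcirc, pairingChar, TensorProduct.tmul_sum, TensorProduct.tmul_smul]

theorem Rcirc_mul_self [DecidableEq G]
    (hmul_left : ∀ g h k : G, π (g * h) k = π g k * π h k)
    (hmul_right : ∀ g h k : G, π g (h * k) = π g h * π g k)
    (hnondeg : ∀ g : G, (∀ h : G, π g h = 1) → g = 1) :
    Rcirc G π * Rcirc G π =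
      (Fintype.card G : ℂ)⁻¹ • ∑ g, single (g ^ 2) (1 : ℂ) ⊗ₜ[ℂ] pairingChar π g := by
  have hN : (Fintype.card G : ℂ) ≠ 0 := by simp
  simp_rw [Rcirc_eq_sum_tmul_pairingChar, smul_mul_smul, sum_mul_sum,
    Algebra.TensorProduct.tmul_mul_tmul, single_mul_single, mul_one,
    pairingChar_mul_pairingChar hmul_left hmul_right hnondeg, TensorProduct.tmul_ite, sum_ite_eq,
    if_pos (mem_univ _), TensorProduct.tmul_smul, ← smul_sum, smul_smul, ← sq]
  rw [sq, mul_assoc, inv_mul_cancel₀ hN, mul_one]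

theorem sum_two_torsion_pairingChar_mul [DecidableEq G]
    (hmul_left : ∀ g h k : G, π (g * h) k = π g k * π h k)
    (hmul_right : ∀ g h k : G, π g (h * k) = π g h * π g k) (hsymm : ∀ g h : G, π g h = π h g)
    (hnondeg : ∀ g : G, (∀ h : G, π g h = 1) → g = 1) (e : G) :
    ∑ x ∈ univ.filter (fun x : G => x ^ 2 = 1), pairingChar π (e * x) =
      ∑ f, (π e (f ^ 2) : ℂ)⁻¹ • single (f ^ 2) (1 : ℂ) := by
  rw [← sum_fiberwise' univ (· ^ 2) fun k => (π e k : ℂ)⁻¹ • single k (1 : ℂ)]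
  simp_rw [pairingChar, hmul_left, Units.val_mul, mul_inv, mul_comm (π e _ : ℂ)⁻¹, ← smul_smul]
  rw [sum_comm]
  simp_rw [← sum_smul, sum_two_torsion_pairing_inv hmul_left hmul_right hsymm hnondeg, sum_const,
    Nat.cast_smul_eq_nsmul, smul_assoc]

theorem card_two_torsion_smul_sum_sq_tmul_pairingChar [DecidableEq G]
    (hmul_left : ∀ g h k : G, π (g * h) k = π g k * π h k)
    (hmul_right : ∀ g h k : G, π g (h * k) = π g h * π g k) (hsymm : ∀ g h : G, π g h = π h g)
    (hnondeg : ∀ g : G, (∀ h : G, π g h = 1) → g = 1) :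
    ((univ.filter (fun x : G => x ^ 2 = 1)).card : ℂ) •
        ∑ g, single (g ^ 2) (1 : ℂ) ⊗ₜ[ℂ] pairingChar π g =
      ∑ e, ∑ f, (π e (f ^ 2) : ℂ)⁻¹ • (single (e ^ 2) (1 : ℂ) ⊗ₜ[ℂ] single (f ^ 2) (1 : ℂ)) := by
  set X := univ.filter (fun x : G => x ^ 2 = 1)
  have hsq (e x : G) (hx : x ∈ X) : (e * x) ^ 2 = e ^ 2 := by
    rw [mul_pow, (mem_filter.mp hx).2, mul_one]
  calc (X.card : ℂ) • ∑ g, single (g ^ 2) (1 : ℂ) ⊗ₜ[ℂ] pairingChar π g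
      = ∑ x ∈ X, ∑ e, single ((e * x) ^ 2) (1 : ℂ) ⊗ₜ[ℂ] pairingChar π (e * x) := by
        rw [Nat.cast_smul_eq_nsmul, ← sum_const]
        exact sum_congr rfl fun x _ =>
          (Equiv.sum_comp (Equiv.mulRight x) fun g => single (g ^ 2) 1 ⊗ₜ pairingChar π g).symm
    _ = ∑ e, single (e ^ 2) (1 : ℂ) ⊗ₜ[ℂ] ∑ x ∈ X, pairingChar π (e * x) := by
        rw [sum_comm]
        simp_rw [TensorProduct.tmul_sum]
        exact sum_congr rfl fun e _ => sum_congr rfl fun x hx => by rw [hsq e x hx]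
    _ = _ := by
        simp_rw [X, sum_two_torsion_pairingChar_mul hmul_left hmul_right hsymm hnondeg,
          TensorProduct.tmul_sum, TensorProduct.tmul_smul]

end PairingChar

/-- `R̊² = (|G|·|X|)⁻¹ ∑_{e,f} π(e,f²)⁻¹ e² ⊗ f²` where `X = {x ∈ G | x² = 1}`;
i.e. `R̊² = |2G|⁻¹ ∑_{c,d ∈ 2G} π₂(c,d)⁻¹ c ⊗ d`, which lies in `ℂ[2G] ⊗ ℂ[2G]`. -/
theorem stmt_3 {G : Type*} [CommGroup G] [Fintype G] [DecidableEq G]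
    (π : G → G → ℂˣ)
    (hmul_left : ∀ g h k : G, π (g * h) k = π g k * π h k)
    (hmul_right : ∀ g h k : G, π g (h * k) = π g h * π g k)
    (hsymm : ∀ g h : G, π g h = π h g)
    (hnondeg : ∀ g : G, (∀ h : G, π g h = 1) → g = 1) :
    Rcirc G π * Rcirc G π =
      ((Fintype.card G : ℂ) * ((Finset.univ.filter (fun x : G => x ^ 2 = 1)).card : ℂ))⁻¹ •
        ∑ e : G, ∑ f : G, ((π e (f ^ 2) : ℂ))⁻¹ •
          (MonoidAlgebra.single (e ^ 2) (1 : ℂ) ⊗ₜ[ℂ] MonoidAlgebra.single (f ^ 2) (1 : ℂ)) := by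
  have hX : ((univ.filter (fun x : G => x ^ 2 = 1)).card : ℂ) ≠ 0 :=
    Nat.cast_ne_zero.mpr (card_ne_zero.mpr ⟨1, by simp⟩)
  rw [Rcirc_mul_self hmul_left hmul_right hnondeg,
    ← card_two_torsion_smul_sum_sq_tmul_pairingChar hmul_left hmul_right hsymm hnondeg, smul_smul,
    mul_inv, mul_assoc, inv_mul_cancel₀ hX, mul_one]
end

section
/- Let G be a finite commutative group and π a pairing on G, and let b ∈ G. Then (Σ_{g ∈ G} (π g g : ℂ) · (π g b)) · (Σ_{h ∈ G} ((π h h)⁻¹ : ℂ) · ((π h b)⁻¹)) = |G| · Σ_{x ∈ G, x² = 1} (π x x : ℂ) · (π x b). (Since the values of π are roots of unity, the left-hand side equals |φ(b)|² for the Gauss sum φ(b) = Σ_{g ∈ G} π(g,g)·π(g,b).) -/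
/-- The absolute value of the generalized quadratic Gauss sum
`φ(b) = ∑_{g ∈ G} π(g,g)·π(g,b)`:
`φ(b) · conj(φ(b)) = |G| · ∑_{x² = 1} π(x,x)·π(x,b)`. -/
theorem stmt_5 {G : Type*} [CommGroup G] [Fintype G] [DecidableEq G]
    (π : G → G → ℂˣ)
    (hmul_left : ∀ g h k : G, π (g * h) k = π g k * π h k)
    (hmul_right : ∀ g h k : G, π g (h * k) = π g h * π g k)
    (hsymm : ∀ g h : G, π g h = π h g)
    (hnondeg : ∀ g : G, (∀ h : G, π g h = 1) → g = 1)
    (b : G) :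
    (∑ g : G, ((π g g : ℂ) * (π g b : ℂ))) *
      (∑ h : G, (((π h h : ℂ))⁻¹ * ((π h b : ℂ))⁻¹)) =
    (Fintype.card G : ℂ) *
      ∑ x ∈ Finset.univ.filter (fun x : G => x ^ 2 = 1), ((π x x : ℂ) * (π x b : ℂ)) := by
  have hone : ∀ k : G, π 1 k = 1 := by
    intro k
    have h := hmul_left 1 1 k
    rw [one_mul] at h
    exact left_eq_mul.mp h
  have hzero : ∀ y : G, y ≠ 1 → ∑ h : G, ((π y h : ℂ)) = 0 := by
    intro y hy
    obtain ⟨h₀, hh₀⟩ : ∃ h, π y h ≠ 1 := by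
      by_contra hc
      push_neg at hc
      exact hy (hnondeg y hc)
    have key : (π y h₀ : ℂ) * ∑ h : G, (π y h : ℂ) = ∑ h : G, (π y h : ℂ) := by
      rw [Finset.mul_sum]
      refine Fintype.sum_equiv (Equiv.mulLeft h₀) _ _ fun h => ?_
      simp only [Equiv.coe_mulLeft, hmul_right, Units.val_mul]
    have hne : (π y h₀ : ℂ) ≠ 1 := fun h => hh₀ (Units.ext (by simpa using h))
    have : ((π y h₀ : ℂ) - 1) * ∑ h : G, (π y h : ℂ) = 0 := by
      rw [sub_mul, one_mul, key, sub_self]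
    rcases mul_eq_zero.mp this with h | h
    · exact absurd (by linear_combination h) hne
    · exact h
  have lhs_eq : (∑ g : G, ((π g g : ℂ) * (π g b : ℂ))) *
      (∑ h : G, (((π h h : ℂ))⁻¹ * ((π h b : ℂ))⁻¹)) =
      ∑ x : G, ((π x x : ℂ) * (π x b : ℂ)) * ∑ h : G, (π (x ^ 2) h : ℂ) := by
    calc (∑ g : G, ((π g g : ℂ) * (π g b : ℂ))) *
        (∑ h : G, (((π h h : ℂ))⁻¹ * ((π h b : ℂ))⁻¹))
        = ∑ h : G, ∑ g : G, ((π g g : ℂ) * (π g b : ℂ)) *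
            (((π h h : ℂ))⁻¹ * ((π h b : ℂ))⁻¹) := by
          rw [Finset.sum_mul_sum, Finset.sum_comm]
      _ = ∑ h : G, ∑ x : G, ((π x x : ℂ) * (π x b : ℂ)) * (π (x ^ 2) h : ℂ) :=
          Finset.sum_congr rfl fun h _ => ?_
      _ = ∑ x : G, ∑ h : G, ((π x x : ℂ) * (π x b : ℂ)) * (π (x ^ 2) h : ℂ) :=
          Finset.sum_comm
      _ = ∑ x : G, ((π x x : ℂ) * (π x b : ℂ)) * ∑ h : G, (π (x ^ 2) h : ℂ) :=
          Finset.sum_congr rfl fun x _ => (Finset.mul_sum _ _ _).symm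
    refine (Fintype.sum_equiv (Equiv.mulLeft h)
      (fun x => ((π x x : ℂ) * (π x b : ℂ)) * (π (x ^ 2) h : ℂ))
      (fun g => ((π g g : ℂ) * (π g b : ℂ)) * (((π h h : ℂ))⁻¹ * ((π h b : ℂ))⁻¹))
      fun x => ?_).symm
    have e1 : π (h * x) (h * x) = π h h * π x h * π x h * π x x := by
      rw [hmul_left, hmul_right, hmul_right, hsymm h x]; simp [mul_assoc]
    have e2 : π (h * x) b = π h b * π x b := hmul_left h x b
    have e3 : π (x ^ 2) h = π x h * π x h := by rw [sq, hmul_left]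
    simp only [Equiv.coe_mulLeft, e1, e2, e3, Units.val_mul]
    have n1 : (π h h : ℂ) ≠ 0 := Units.ne_zero _
    have n2 : (π h b : ℂ) ≠ 0 := Units.ne_zero _
    field_simp
  rw [lhs_eq, ← Finset.sum_filter_add_sum_filter_not Finset.univ (fun x : G => x ^ 2 = 1)]
  have h2 : ∑ x ∈ Finset.univ.filter (fun x : G => ¬ x ^ 2 = 1),
      ((π x x : ℂ) * (π x b : ℂ)) * ∑ h : G, (π (x ^ 2) h : ℂ) = 0 := by
    refine Finset.sum_eq_zero fun x hx => ?_
    rw [hzero _ (Finset.mem_filter.mp hx).2, mul_zero]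
  rw [h2, add_zero, Finset.mul_sum]
  refine Finset.sum_congr rfl fun x hx => ?_
  have hx1 : x ^ 2 = 1 := (Finset.mem_filter.mp hx).2
  have : ∑ h : G, (π (x ^ 2) h : ℂ) = (Fintype.card G : ℂ) := by
    simp [hx1, hone]
  rw [this]; ring
end

section
/- Let G be a finite commutative group and π a pairing on G, and let c ∈ G. Let X = {x ∈ G | x² = 1} and 2G = {g² | g ∈ G}. Then the following are equivalent: (1) for every x ∈ G with x² = 1 one has π x x = π x c; (2) for every y ∈ G, Σ_{x ∈ G, x² = 1} (π x x : ℂ) · (π x y) equals |X| if c·y ∈ 2G and equals 0 otherwise. -/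
/-!
For `x` in the 2-torsion subgroup `X`, the map `z ↦ π x z` is a character of `G` and `x ↦ π x z`
is a character of `X`, so orthogonality of characters evaluates every sum in sight. Counting
`∑ z, ∑ x ∈ X, π x z` in both orders, nondegeneracy shows that the annihilator of `X` has index
`|X|`; it contains the squares `2G`, which also have index `|X|`, so it equals `2G`.
Under (1) the summand is `π x (c * y)`, which gives (2). Conversely, at `y = c⁻¹` the summands are
signs summing to `|X|`, so all of them equal `1`, which is (1).
-/

open Finset

theorem Finset.eq_one_of_sq_eq_one_of_sum_eq_card {ι : Type*} {s : Finset ι} {f : ι → ℂ}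
    (hsq : ∀ i ∈ s, f i ^ 2 = 1) (hsum : ∑ i ∈ s, f i = #s) : ∀ i ∈ s, f i = 1 := by
  have hsign : ∀ i ∈ s, f i = 1 ∨ f i = -1 := fun i hi => sq_eq_one_iff.mp (hsq i hi)
  have hle : ∀ i ∈ s, (f i).re ≤ 1 := fun i hi => by
    rcases hsign i hi with h | h <;> norm_num [h]
  have hre : ∀ i ∈ s, (f i).re = 1 := by
    refine (sum_eq_sum_iff_of_le hle).1 ?_
    simpa using congrArg Complex.re hsum
  intro i hi
  refine (hsign i hi).resolve_right fun h => ?_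
  have := hre i hi
  norm_num [h] at this

section CharacterSums

variable {R : Type*} [CommRing R] [IsDomain R]

theorem sum_coe_units_hom {H : Type*} [Group H] [Fintype H] (φ : H →* Rˣ) [Decidable (φ = 1)] :
    ∑ h, (φ h : R) = if φ = 1 then (Fintype.card H : R) else 0 := by
  classical
  have := sum_hom_units ((Units.coeHom R).comp φ)
  simp_all [MonoidHom.ext_iff]

open scoped Classical in
theorem sum_pow_eq_one_coe_units_hom {G : Type*} [CommGroup G] [Fintype G] [DecidableEq G]
    (n : ℕ) (φ : G →* Rˣ) :
    ∑ x ∈ univ.filter (fun x : G => x ^ n = 1), (φ x : R) =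
      if ∀ x : G, x ^ n = 1 → φ x = 1 then (#(univ.filter fun x : G => x ^ n = 1) : R)
      else 0 := by
  classical
  set K := (powMonoidHom n : G →* G).ker
  rw [Finset.sum_subtype (p := (· ∈ K)) _ (by simp [K])]
  refine (sum_coe_units_hom (φ.comp K.subtype)).trans (if_congr ?_ ?_ rfl)
  · simp [MonoidHom.ext_iff, K]
  · rw [Fintype.card_subtype]
    simp [K]

end CharacterSums

namespace MonoidHom

variable {G : Type*} [CommGroup G]

section

variable {M : Type*} [CommGroup M] (π : G → G → M)
  (hmul_left : ∀ g h k : G, π (g * h) k = π g k * π h k)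
  (hmul_right : ∀ g h k : G, π g (h * k) = π g h * π g k)

def ofBimultiplicative : G →* G →* M :=
  MonoidHom.mk' (fun g => MonoidHom.mk' (π g) (hmul_right g)) fun g h => ext (hmul_left g h)

@[simp]
theorem ofBimultiplicative_apply (g h : G) :
    ofBimultiplicative π hmul_left hmul_right g h = π g h :=
  rfl

def annihilator (B : G →* G →* M) (X : Subgroup G) : Subgroup G :=
  (B.comp X.subtype).flip.ker

theorem mem_annihilator {B : G →* G →* M} {X : Subgroup G} {z : G} :
    z ∈ B.annihilator X ↔ ∀ x ∈ X, B x z = 1 := by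
  simp [annihilator, MonoidHom.ext_iff]

end

variable {R : Type*} [CommRing R] [IsDomain R]

theorem card_annihilator_mul_card [CharZero R] [Finite G] {B : G →* G →* Rˣ}
    (hB : Function.Injective B) (X : Subgroup G) :
    Nat.card (B.annihilator X) * Nat.card X = Nat.card G := by
  classical
  have := Fintype.ofFinite G
  have hann : ∑ z : G, ∑ x : X, (B x z : R) = Nat.card (B.annihilator X) * Nat.card X := by
    have := fun z : G => sum_coe_units_hom ((B.comp X.subtype).flip z)
    simp only [flip_apply, comp_apply, Subgroup.coe_subtype] at this
    simp only [this]
    rw [Finset.sum_ite, sum_const_zero, add_zero, sum_const, nsmul_eq_mul,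
      ← Fintype.card_subtype, ← Nat.card_eq_fintype_card, ← Nat.card_eq_fintype_card]
    rfl
  have hG : ∑ z : G, ∑ x : X, (B x z : R) = Nat.card G := by
    rw [Finset.sum_comm]
    have := fun x : X => sum_coe_units_hom (B x)
    simp only [this, map_eq_one_iff _ hB, OneMemClass.coe_eq_one]
    rw [Fintype.sum_ite_eq', Nat.card_eq_fintype_card]
  exact_mod_cast hann.symm.trans hG

theorem annihilator_ker_powMonoidHom [CharZero R] [Finite G] {B : G →* G →* Rˣ}
    (hB : Function.Injective B) (n : ℕ) :
    B.annihilator (powMonoidHom n).ker = (powMonoidHom n).range := by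
  symm
  refine Subgroup.eq_of_le_of_card_ge ?_ ?_
  · rintro _ ⟨g, rfl⟩
    refine mem_annihilator.2 fun x hx => ?_
    rw [mem_ker, powMonoidHom_apply] at hx
    rw [powMonoidHom_apply, map_pow, ← pow_apply, ← map_pow, hx, map_one, one_apply]
  · have hann := card_annihilator_mul_card hB (powMonoidHom n : G →* G).ker
    have hrange := (powMonoidHom n : G →* G).ker.card_mul_index
    rw [Subgroup.index_ker, mul_comm] at hrange
    exact (Nat.eq_of_mul_eq_mul_right Nat.card_pos (hann.trans hrange.symm)).le

end MonoidHom

theorem stmt_6_general {G : Type*} [CommGroup G] [Fintype G] [DecidableEq G]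
    (π : G → G → ℂˣ)
    (hmul_left : ∀ g h k : G, π (g * h) k = π g k * π h k)
    (hmul_right : ∀ g h k : G, π g (h * k) = π g h * π g k)
    (hnondeg : ∀ g : G, (∀ h : G, π g h = 1) → g = 1)
    (c : G) :
    (∀ x : G, x ^ 2 = 1 → π x x = π x c) ↔
    (∀ y : G,
      (∑ x ∈ Finset.univ.filter (fun x : G => x ^ 2 = 1), ((π x x : ℂ) * (π x y : ℂ))) =
        if ∃ g : G, g ^ 2 = c * y then
          ((Finset.univ.filter (fun x : G => x ^ 2 = 1)).card : ℂ)
        else 0) := by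
  set B := MonoidHom.ofBimultiplicative π hmul_left hmul_right
  have hB : Function.Injective B := (injective_iff_map_eq_one B).2 fun g hg =>
    hnondeg g fun h => DFunLike.congr_fun hg h
  have hsquares (z : G) : (∀ x : G, x ^ 2 = 1 → π x z = 1) ↔ ∃ g : G, g ^ 2 = z := by
    simpa [B, MonoidHom.mem_annihilator] using
      SetLike.ext_iff.1 (MonoidHom.annihilator_ker_powMonoidHom hB 2) z
  constructor
  · intro h y
    have hterm : ∀ x ∈ univ.filter (fun x : G => x ^ 2 = 1),
        (π x x : ℂ) * π x y = B.flip (c * y) x := fun x hx => by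
      simp [B, h x (mem_filter.1 hx).2]
    rw [sum_congr rfl hterm, sum_pow_eq_one_coe_units_hom]
    exact if_congr (hsquares _) rfl rfl
  · intro h x hx
    have hsum := h c⁻¹
    rw [if_pos ⟨1, by simp⟩] at hsum
    have hsq : ∀ x ∈ univ.filter (fun x : G => x ^ 2 = 1), ((π x x : ℂ) * π x c⁻¹) ^ 2 = 1 :=
      fun x hx => by
        have hx2 : x ^ 2 = 1 := (mem_filter.1 hx).2
        have : B x (x * c⁻¹) ^ 2 = 1 := by
          rw [← MonoidHom.pow_apply, ← map_pow, hx2, map_one, MonoidHom.one_apply]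
        simpa [B, hmul_right, ← Units.val_mul, ← Units.val_pow_eq_pow_val] using this
    have hx1 : π x x * π x c⁻¹ = 1 := Units.ext <| by
      simpa using eq_one_of_sq_eq_one_of_sum_eq_card hsq hsum x (by simpa using hx)
    rwa [show π x c⁻¹ = (π x c)⁻¹ from map_inv (B x) c, mul_inv_eq_one] at hx1

/-- Characterization of 2-modularity: `π(x,x) = π(x,c)` for all 2-torsion `x` iff the
function `ψ(y) = ∑_{x²=1} π(x,x)π(x,y)` equals `|X|` on the coset of squares containing
`c⁻¹` and `0` elsewhere. -/
theorem stmt_6 {G : Type*} [CommGroup G] [Fintype G] [DecidableEq G]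
    (π : G → G → ℂˣ)
    (hmul_left : ∀ g h k : G, π (g * h) k = π g k * π h k)
    (hmul_right : ∀ g h k : G, π g (h * k) = π g h * π g k)
    (hsymm : ∀ g h : G, π g h = π h g)
    (hnondeg : ∀ g : G, (∀ h : G, π g h = 1) → g = 1)
    (c : G) :
    (∀ x : G, x ^ 2 = 1 → π x x = π x c) ↔
    (∀ y : G,
      (∑ x ∈ Finset.univ.filter (fun x : G => x ^ 2 = 1), ((π x x : ℂ) * (π x y : ℂ))) =
        if ∃ g : G, g ^ 2 = c * y then
          ((Finset.univ.filter (fun x : G => x ^ 2 = 1)).card : ℂ)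
        else 0) :=
  stmt_6_general π hmul_left hmul_right hnondeg c
end

section
/- Let G be a finite commutative group and π a pairing on G, and let c ∈ G. If there exists x ∈ G with x² = 1 and π x x ≠ π x c, then the Gauss sum vanishes: Σ_{g ∈ G} (π g g : ℂ) · ((π g c)⁻¹) = 0. -/
/-- If the 2-modularity condition fails for some 2-torsion element, the Gauss sum
`∑_g π(g,g)·π(g,c)⁻¹` vanishes (so `∫ν = 0` when `u_q(𝔤)` is not 2-modular). -/
theorem stmt_8 {G : Type*} [CommGroup G] [Fintype G] [DecidableEq G]
    (π : G → G → ℂˣ)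
    (hmul_left : ∀ g h k : G, π (g * h) k = π g k * π h k)
    (hmul_right : ∀ g h k : G, π g (h * k) = π g h * π g k)
    (hsymm : ∀ g h : G, π g h = π h g)
    (hnondeg : ∀ g : G, (∀ h : G, π g h = 1) → g = 1)
    (c : G)
    (x : G) (hx : x ^ 2 = 1) (hne : π x x ≠ π x c) :
    ∑ g : G, ((π g g : ℂ) * ((π g c : ℂ))⁻¹) = 0 := by
  set S : ℂ := ∑ g : G, ((π g g : ℂ) * ((π g c : ℂ))⁻¹) with hS
  have hone : ∀ g : G, π g 1 = 1 := by
    intro g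
    have := hmul_right g 1 1
    rw [one_mul] at this
    exact left_eq_mul.mp this
  have hsq : ∀ g : G, π g x * π g x = 1 := by
    intro g
    rw [← hmul_right, ← pow_two, hx, hone]
  have hlam : ∀ g : G, ((π (g * x) (g * x) : ℂ) * ((π (g * x) c : ℂ))⁻¹)
      = ((π x x : ℂ) * ((π x c : ℂ))⁻¹) * ((π g g : ℂ) * ((π g c : ℂ))⁻¹) := by
    intro g
    have h1 : π (g * x) (g * x) = π g g * π x x := by
      rw [hmul_left, hmul_right, hmul_right, hsymm x g]
      have := hsq g
      calc π g g * π g x * (π g x * π x x)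
          = π g g * π x x * (π g x * π g x) := by
            simp only [mul_comm, mul_left_comm, mul_assoc]
        _ = π g g * π x x := by rw [this, mul_one]
    have h2 : π (g * x) c = π g c * π x c := hmul_left g x c
    rw [h1, h2]
    push_cast
    field_simp
  have hSeq : S = ((π x x : ℂ) * ((π x c : ℂ))⁻¹) * S := by
    calc S = ∑ g : G, ((π (g * x) (g * x) : ℂ) * ((π (g * x) c : ℂ))⁻¹) := by
            rw [hS]
            exact (Fintype.sum_equiv (Equiv.mulRight x) _ _ (fun g => rfl)).symm
      _ = ∑ g : G, ((π x x : ℂ) * ((π x c : ℂ))⁻¹) * ((π g g : ℂ) * ((π g c : ℂ))⁻¹) := by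
            exact Finset.sum_congr rfl (fun g _ => hlam g)
      _ = ((π x x : ℂ) * ((π x c : ℂ))⁻¹) * S := by rw [← Finset.mul_sum, hS]
  have hne' : ((π x x : ℂ) * ((π x c : ℂ))⁻¹) ≠ 1 := by
    intro h
    apply hne
    ext
    have hc : ((π x c : ℂ)) ≠ 0 := Units.ne_zero _
    field_simp at h
    exact h
  have : (((π x x : ℂ) * ((π x c : ℂ))⁻¹) - 1) * S = 0 := by
    rw [sub_mul, one_mul, ← hSeq, sub_self]
  rcases mul_eq_zero.mp this with h | h
  · exact absurd (by linear_combination h) hne'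
  · exact h
end

section
/- Let H be a Hopf algebra over a field k with comultiplication Δ (Sweedler notation Δu = Σ u₍₁₎ ⊗ u₍₂₎), counit ε and antipode γ. Let a, b : Fin n → H be finite families and set R = Σᵢ aᵢ ⊗ bᵢ ∈ H ⊗[k] H; assume the quasitriangularity axioms (Δ ⊗ id)(R) = R¹³ · R²³, (id ⊗ Δ)(R) = R¹³ · R¹², and (swap(Δh)) · R = R · (Δh) for all h ∈ H, together with the normalizations Σᵢ ε(aᵢ) · bᵢ = 1 and Σᵢ ε(bᵢ) · aᵢ = 1. Let σ : H →ₗ[k] k be ad-invariant: for all x, u ∈ H, Σ σ(x₍₁₎ · u · γ(x₍₂₎)) = ε(x) · σ(u). Write ad x.u = Σ x₍₁₎ · u · γ(x₍₂₎). Then the following are equivalent: (1) σ is a left integral on H, i.e. for all u ∈ H, Σ u₍₁₎ · σ(u₍₂₎) = σ(u) · 1; (2) for all u ∈ H, Σᵢ σ(ad bᵢ.u₍₂₎) · (aᵢ · u₍₁₎) = σ(u) · 1 and Σᵢ σ(ad aᵢ.u₍₂₎) · (u₍₁₎ · γ(bᵢ)) = σ(u) · 1. -/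
open scoped TensorProduct

/-- The left adjoint action `ad x : u ↦ ∑ x₍₁₎ · u · γ(x₍₂₎)` in a Hopf algebra,
as a linear map. -/
noncomputable def adOp (k : Type*) [CommRing k] (H : Type*) [Ring H] [HopfAlgebra k H]
    (x : H) : H →ₗ[k] H :=
  LinearMap.mul' k H ∘ₗ
    TensorProduct.map LinearMap.id (LinearMap.mul' k H) ∘ₗ
    TensorProduct.map LinearMap.id (TensorProduct.comm k H H).toLinearMap ∘ₗ
    (TensorProduct.assoc k H H H).toLinearMap ∘ₗ
    LinearMap.rTensor H
      (TensorProduct.map LinearMap.id (HopfAlgebra.antipode (R := k))) ∘ₗ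
    TensorProduct.mk k (H ⊗[k] H) H (Coalgebra.comul (R := k) x)

lemma antipode_one_aux (k : Type*) [CommRing k] (H : Type*) [Ring H] [HopfAlgebra k H] :
    HopfAlgebra.antipode (R := k) (1 : H) = 1 := by
  have h := HopfAlgebra.mul_antipode_rTensor_comul_apply (R := k) (A := H) 1
  simpa [Bialgebra.comul_one, Bialgebra.counit_one, Algebra.TensorProduct.one_def] using h

/-- For a quasitriangular Hopf algebra `(H, R = ∑ aᵢ ⊗ bᵢ)` and an ad-invariant linear
functional `σ`, `σ` is a left integral on `H` iff `σ` is a two-sided integral on the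
braided Hopf algebra `U`, i.e. `∑ᵢ σ(ad bᵢ.u₍₂₎)·(aᵢ·u₍₁₎) = σ(u)·1` and
`∑ᵢ σ(ad aᵢ.u₍₂₎)·(u₍₁₎·γ(bᵢ)) = σ(u)·1` for all `u`. -/
theorem stmt_12 {k : Type*} [Field k] {H : Type*} [Ring H] [HopfAlgebra k H]
    {n : ℕ} (a b : Fin n → H)
    (hQT1 : TensorProduct.map (Coalgebra.comul (R := k)) LinearMap.id
        (∑ i, a i ⊗ₜ[k] b i) =
      (∑ i, (a i ⊗ₜ[k] (1 : H)) ⊗ₜ[k] b i) * (∑ i, ((1 : H) ⊗ₜ[k] a i) ⊗ₜ[k] b i))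
    (hQT2 : TensorProduct.map LinearMap.id (Coalgebra.comul (R := k))
        (∑ i, a i ⊗ₜ[k] b i) =
      (∑ i, a i ⊗ₜ[k] ((1 : H) ⊗ₜ[k] b i)) * (∑ i, a i ⊗ₜ[k] (b i ⊗ₜ[k] (1 : H))))
    (hQT3 : ∀ h : H,
      (TensorProduct.comm k H H) (Coalgebra.comul (R := k) h) * (∑ i, a i ⊗ₜ[k] b i) =
        (∑ i, a i ⊗ₜ[k] b i) * Coalgebra.comul (R := k) h)
    (hnorm1 : ∑ i, Coalgebra.counit (R := k) (a i) • b i = (1 : H))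
    (hnorm2 : ∑ i, Coalgebra.counit (R := k) (b i) • a i = (1 : H))
    (σ : H →ₗ[k] k)
    (hσ : ∀ x u : H, σ (adOp k H x u) = Coalgebra.counit (R := k) x * σ u) :
    (∀ u : H,
        TensorProduct.rid k H
          (TensorProduct.map LinearMap.id σ (Coalgebra.comul (R := k) u)) = σ u • (1 : H)) ↔
    (∀ u : H,
        (∑ i, TensorProduct.rid k H
            (TensorProduct.map (LinearMap.mulLeft k (a i)) (σ ∘ₗ adOp k H (b i))
              (Coalgebra.comul (R := k) u)) = σ u • (1 : H)) ∧
        (∑ i, TensorProduct.rid k H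
            (TensorProduct.map
              (LinearMap.mulRight k (HopfAlgebra.antipode (R := k) (b i)))
              (σ ∘ₗ adOp k H (a i))
              (Coalgebra.comul (R := k) u)) = σ u • (1 : H))) := by
  have key1 : ∀ c : H ⊗[k] H,
      ∑ i, TensorProduct.rid k H
          (TensorProduct.map (LinearMap.mulLeft k (a i)) (σ ∘ₗ adOp k H (b i)) c)
        = TensorProduct.rid k H (TensorProduct.map LinearMap.id σ c) := by
    intro c
    induction c using TensorProduct.induction_on with
    | zero => simp
    | tmul x y =>
        simp only [TensorProduct.map_tmul, TensorProduct.rid_tmul, LinearMap.comp_apply,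
          LinearMap.mulLeft_apply, LinearMap.id_coe, id_eq]
        calc ∑ i, σ (adOp k H (b i) y) • (a i * x)
            = ∑ i, σ y • ((Coalgebra.counit (R := k) (b i) • a i) * x) := by
              refine Finset.sum_congr rfl fun i _ => ?_
              rw [hσ, smul_mul_assoc, smul_smul, mul_comm]
          _ = σ y • ((∑ i, Coalgebra.counit (R := k) (b i) • a i) * x) := by
              rw [← Finset.smul_sum, ← Finset.sum_mul]
          _ = σ y • x := by rw [hnorm2, one_mul]
    | add p q hp hq =>
        simp only [map_add, Finset.sum_add_distrib, hp, hq]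
  have key2 : ∀ c : H ⊗[k] H,
      ∑ i, TensorProduct.rid k H
          (TensorProduct.map (LinearMap.mulRight k (HopfAlgebra.antipode (R := k) (b i)))
            (σ ∘ₗ adOp k H (a i)) c)
        = TensorProduct.rid k H (TensorProduct.map LinearMap.id σ c) := by
    intro c
    induction c using TensorProduct.induction_on with
    | zero => simp
    | tmul x y =>
        simp only [TensorProduct.map_tmul, TensorProduct.rid_tmul, LinearMap.comp_apply,
          LinearMap.mulRight_apply, LinearMap.id_coe, id_eq]
        calc ∑ i, σ (adOp k H (a i) y) • (x * HopfAlgebra.antipode (R := k) (b i))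
            = ∑ i, σ y • (x * (Coalgebra.counit (R := k) (a i) •
                HopfAlgebra.antipode (R := k) (b i))) := by
              refine Finset.sum_congr rfl fun i _ => ?_
              rw [hσ, mul_smul_comm, smul_smul, mul_comm]
          _ = σ y • (x * ∑ i, Coalgebra.counit (R := k) (a i) •
                HopfAlgebra.antipode (R := k) (b i)) := by
              rw [← Finset.smul_sum, ← Finset.mul_sum]
          _ = σ y • x := by
              have : ∑ i, Coalgebra.counit (R := k) (a i) •
                  HopfAlgebra.antipode (R := k) (b i) = (1 : H) := by
                rw [show (∑ i, Coalgebra.counit (R := k) (a i) •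
                    HopfAlgebra.antipode (R := k) (b i)) =
                    HopfAlgebra.antipode (R := k)
                      (∑ i, Coalgebra.counit (R := k) (a i) • b i) by
                  simp [map_sum, map_smul]]
                rw [hnorm1, antipode_one_aux]
              rw [this, mul_one]
    | add p q hp hq =>
        simp only [map_add, Finset.sum_add_distrib, hp, hq]
  constructor
  · intro h u
    exact ⟨by rw [key1]; exact h u, by rw [key2]; exact h u⟩
  · intro h u
    rw [← key1 (Coalgebra.comul u)]
    exact (h u).1
end
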